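/- Let I be an ideal of a Noetherian commutative ring R. Then I satisfies the countable strong annihilator condition (for every countable S ⊆ I there is a ∈ I with Ann(S) = Ann(a)) if and only if I satisfies the strong annihilator condition (for every finite F ⊆ I there is a ∈ I with Ann(F) = Ann(a)). -/

import Mathlib

/-
The annihilator of a set `S` is the annihilator of the ideal it spans, and in a Noetherian ring
that ideal is spanned by a finite subset `F ⊆ S`; so `Ann(S) = Ann(F)`, and the finite condition
gives the condition for every `S ⊆ I`, countable or not.
-/

theorem setOf_forall_mul_eq_zero_eq_annihilator_span {R : Type*} [CommSemiring R] (S : Set R) :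
    {r : R | ∀ s ∈ S, r * s = 0} = ((Ideal.span S).annihilator : Set R) := by
  ext r
  simp [Ideal.span, Submodule.mem_annihilator_span]

theorem IsNoetherianRing.exists_finset_subset_setOf_forall_mul_eq_zero_eq {R : Type*}
    [CommRing R] [IsNoetherianRing R] (S : Set R) :
    ∃ F : Finset R, ↑F ⊆ S ∧ {r : R | ∀ s ∈ F, r * s = 0} = {r : R | ∀ s ∈ S, r * s = 0} := by
  obtain ⟨F, hFS, hspan⟩ :=
    (Submodule.fg_span_iff_fg_span_finset_subset S).mp (IsNoetherian.noetherian (R := R) _)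
  refine ⟨F, hFS, ?_⟩
  change {r : R | ∀ s ∈ (F : Set R), r * s = 0} = _
  rw [setOf_forall_mul_eq_zero_eq_annihilator_span, setOf_forall_mul_eq_zero_eq_annihilator_span,
    Ideal.span, Ideal.span, hspan]

theorem stmt11 {R : Type*} [CommRing R] [IsNoetherianRing R] (I : Ideal R) :
    (∀ S : Set R, S.Countable → S ⊆ I →
      ∃ a ∈ I, {r : R | ∀ s ∈ S, r * s = 0} = {r : R | r * a = 0}) ↔
    (∀ F : Finset R, ↑F ⊆ (I : Set R) →
      ∃ a ∈ I, {r : R | ∀ s ∈ F, r * s = 0} = {r : R | r * a = 0}) := by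
  constructor
  · intro hcountable F hFI
    exact hcountable F F.countable_toSet hFI
  · intro hfinite S _ hSI
    obtain ⟨F, hFS, hF⟩ := IsNoetherianRing.exists_finset_subset_setOf_forall_mul_eq_zero_eq S
    obtain ⟨a, haI, ha⟩ := hfinite F (hFS.trans hSI)
    exact ⟨a, haI, hF ▸ ha⟩
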